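/- arXiv:1804.06572 — 3 statements merged into one kernel-verified Lean document; each statement's English description precedes it below -/
import Mathlib

section
/- Let Φ be a crystallographic root system in a Euclidean space V. If α, β, γ ∈ Φ satisfy α + β + γ ∈ Φ, and all proper nonempty subsums are nonzero (i.e. α+β ≠ 0, α+γ ≠ 0, β+γ ≠ 0), then at least two of the three sums α+β, α+γ, β+γ belong to Φ. -/
open Pointwise

structure RootSys (V : Type*) [NormedAddCommGroup V] [InnerProductSpace ℝ V] where
  Φ : Set V
  finite : Φ.Finite
  nonzero : ∀ α ∈ Φ, α ≠ (0 : V)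
  line : ∀ α ∈ Φ, Φ ∩ {x : V | ∃ t : ℝ, x = t • α} = {α, -α}
  reflect : ∀ α ∈ Φ, ∀ β ∈ Φ, β - (2 * (inner ℝ α β : ℝ) / (inner ℝ α α : ℝ)) • α ∈ Φ

variable {V : Type*} [NormedAddCommGroup V] [InnerProductSpace ℝ V]

/-- `Φ` is crystallographic: `⟨α^∨, β⟩ ∈ ℤ` for all roots `α, β`. -/
def RootSys.IsCrystallographic (R : RootSys V) : Prop :=
  ∀ α ∈ R.Φ, ∀ β ∈ R.Φ, ∃ n : ℤ, 2 * (inner ℝ α β : ℝ) / (inner ℝ α α : ℝ) = (n : ℝ)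

/-- A subset `S ⊆ Φ` is closed if it is stable under sums of two elements staying in `Φ`. -/
def RootSys.IsClosedSubset (R : RootSys V) (S : Set V) : Prop :=
  ∀ α ∈ S, ∀ β ∈ S, α + β ∈ R.Φ → α + β ∈ S

/-- A set of roots is antisymmetric if it never contains both `α` and `-α`. -/
def IsAntisymSet (S : Set V) : Prop := ∀ α ∈ S, -α ∉ S

/-- A `Φ`-poset: an antisymmetric closed subset of `Φ`. -/
def RootSys.IsPoset (R : RootSys V) (S : Set V) : Prop :=
  S ⊆ R.Φ ∧ IsAntisymSet S ∧ R.IsClosedSubset S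

/-- Closure: roots that are nonnegative integer combinations (multiset sums) of elements of `T`. -/
def RootSys.clos (R : RootSys V) (T : Set V) : Set V :=
  {γ ∈ R.Φ | ∃ M : Multiset V, (∀ x ∈ M, x ∈ T) ∧ M.sum = γ}

/-- Nonnegative integer combinations (multiset sums) of elements of `T`. -/
def nncomb (T : Set V) : Set V :=
  {v | ∃ M : Multiset V, (∀ x ∈ M, x ∈ T) ∧ M.sum = v}

/-- A root system equipped with a generic linear functional determining positive roots. -/
structure PosRootSys (V : Type*) [NormedAddCommGroup V] [InnerProductSpace ℝ V]
    extends RootSys V where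
  f : V →ₗ[ℝ] ℝ
  generic : ∀ α ∈ Φ, f α ≠ 0

def PosRootSys.Pos (P : PosRootSys V) : Set V := {α ∈ P.Φ | 0 < P.f α}

def PosRootSys.Neg (P : PosRootSys V) : Set V := {α ∈ P.Φ | P.f α < 0}

/-- The weak order: `R ≼ S` iff `R⁺ ⊇ S⁺` and `R⁻ ⊆ S⁻`. -/
def PosRootSys.wle (P : PosRootSys V) (R S : Set V) : Prop :=
  S ∩ P.Pos ⊆ R ∩ P.Pos ∧ R ∩ P.Neg ⊆ S ∩ P.Neg

/-- `R` is semiclosed if both `R⁺` and `R⁻` are closed. -/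
def PosRootSys.SemiClosed (P : PosRootSys V) (S : Set V) : Prop :=
  S ⊆ P.Φ ∧ P.toRootSys.IsClosedSubset (S ∩ P.Pos) ∧
    P.toRootSys.IsClosedSubset (S ∩ P.Neg)

/-- Negative closure deletion. -/
def PosRootSys.ncd (P : PosRootSys V) (S : Set V) : Set V :=
  S \ {α | α ∈ S ∩ P.Neg ∧ ∃ X : Finset V, ↑X ⊆ S ∩ P.Pos ∧ α + X.sum id ∈ P.Φ \ S}

/-- Positive closure deletion. -/
def PosRootSys.pcd (P : PosRootSys V) (S : Set V) : Set V :=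
  S \ {α | α ∈ S ∩ P.Pos ∧ ∃ X : Finset V, ↑X ⊆ S ∩ P.Neg ∧ α + X.sum id ∈ P.Φ \ S}

/-- Meet formula on closed subsets. -/
def PosRootSys.wmeet (P : PosRootSys V) (R S : Set V) : Set V :=
  P.ncd (P.toRootSys.clos ((R ∪ S) ∩ P.Pos) ∪ ((R ∩ S) ∩ P.Neg))

/-- Join formula on closed subsets. -/
def PosRootSys.wjoin (P : PosRootSys V) (R S : Set V) : Set V :=
  P.pcd (((R ∩ S) ∩ P.Pos) ∪ P.toRootSys.clos ((R ∪ S) ∩ P.Neg))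

lemma inner_self_pos' {x : V} (hx : x ≠ 0) : (0:ℝ) < inner ℝ x x := by
  have h1 : (inner ℝ x x : ℝ) = ‖x‖ * ‖x‖ := real_inner_self_eq_norm_mul_norm x
  have h2 : 0 < ‖x‖ := norm_pos_iff.mpr hx
  nlinarith

lemma RootSys.neg_mem (R : RootSys V) {α : V} (hα : α ∈ R.Φ) : -α ∈ R.Φ := by
  have h := R.reflect α hα α hα
  have ha : (inner ℝ α α : ℝ) ≠ 0 := inner_self_ne_zero.mpr (R.nonzero α hα)
  have heq : α - (2 * (inner ℝ α α : ℝ) / (inner ℝ α α : ℝ)) • α = -α := by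
    rw [mul_div_assoc, div_self ha, mul_one, two_smul]; abel
  rwa [heq] at h

lemma RootSys.sum_mem (R : RootSys V) (hcr : R.IsCrystallographic) {α β : V}
    (hα : α ∈ R.Φ) (hβ : β ∈ R.Φ) (hneg : (inner ℝ α β : ℝ) < 0) (hne : α + β ≠ 0) :
    α + β ∈ R.Φ := by
  have ha : (0:ℝ) < inner ℝ α α := inner_self_pos' (R.nonzero α hα)
  have hb : (0:ℝ) < inner ℝ β β := inner_self_pos' (R.nonzero β hβ)
  by_cases hprop : ∃ t : ℝ, β = t • α
  · have hmem : β ∈ R.Φ ∩ {x : V | ∃ t : ℝ, x = t • α} := ⟨hβ, hprop⟩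
    rw [R.line α hα] at hmem
    rcases hmem with h | h
    · rw [h] at hneg; linarith
    · rw [h] at hne; simp at hne
  · push_neg at hprop
    have hα0 : ‖α‖ ≠ 0 := norm_ne_zero_iff.mpr (R.nonzero α hα)
    have hcs : (inner ℝ (-α) β : ℝ) < ‖-α‖ * ‖β‖ := by
      rw [inner_lt_norm_mul_iff_real]
      intro hcontra
      apply hprop (-(‖α‖⁻¹ * ‖β‖))
      have h1 : ‖α‖ • β = -(‖β‖ • α) := by
        rw [norm_neg] at hcontra; rw [← hcontra, smul_neg]
      calc β = ‖α‖⁻¹ • (‖α‖ • β) := by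
              rw [smul_smul, inv_mul_cancel₀ hα0, one_smul]
        _ = -(‖α‖⁻¹ * ‖β‖) • α := by rw [h1, smul_neg, smul_smul, neg_smul]
    rw [inner_neg_left, norm_neg] at hcs
    have hsq : (inner ℝ α β : ℝ) * inner ℝ α β < inner ℝ α α * inner ℝ β β := by
      have h1 : (inner ℝ α α : ℝ) = ‖α‖ * ‖α‖ := real_inner_self_eq_norm_mul_norm α
      have h2 : (inner ℝ β β : ℝ) = ‖β‖ * ‖β‖ := real_inner_self_eq_norm_mul_norm β
      nlinarith [hcs, hneg, norm_nonneg α, norm_nonneg β]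
    obtain ⟨n, hn⟩ := hcr α hα β hβ
    obtain ⟨m, hm⟩ := hcr β hβ α hα
    rw [real_inner_comm α β] at hm
    have hnneg : (n:ℝ) < 0 := by
      rw [← hn]
      exact div_neg_of_neg_of_pos (by linarith) ha
    have hmneg : (m:ℝ) < 0 := by
      rw [← hm]
      exact div_neg_of_neg_of_pos (by linarith) hb
    have hprod : (n:ℝ) * m < 4 := by
      rw [← hn, ← hm]
      rw [div_mul_div_comm]
      rw [div_lt_iff₀ (by positivity)]
      nlinarith [hsq]
    have hnZ : n < 0 := by exact_mod_cast hnneg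
    have hmZ : m < 0 := by exact_mod_cast hmneg
    have hprodZ : n * m < 4 := by exact_mod_cast hprod
    have hcase : n = -1 ∨ m = -1 := by
      by_contra hc
      push_neg at hc
      have : n ≤ -2 := by omega
      have : m ≤ -2 := by omega
      nlinarith
    rcases hcase with h | h
    · have hr := R.reflect α hα β hβ
      rw [hn, h] at hr
      have : β - ((-1 : ℤ) : ℝ) • α = α + β := by push_cast; rw [neg_smul, one_smul]; abel
      rwa [this] at hr
    · have hr := R.reflect β hβ α hα
      rw [real_inner_comm α β, hm, h] at hr
      have : α - ((-1 : ℤ) : ℝ) • β = α + β := by push_cast; rw [neg_smul, one_smul]; abel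
      rwa [this] at hr

lemma RootSys.key (R : RootSys V) (hcr : R.IsCrystallographic) {α β γ : V}
    (hα : α ∈ R.Φ) (hβ : β ∈ R.Φ) (hγ : γ ∈ R.Φ) (hsum : α + β + γ ∈ R.Φ)
    (h1 : α + β ≠ 0) (h2 : α + γ ≠ 0) (h3 : β + γ ≠ 0)
    (nb : α + β ∉ R.Φ) (nc : α + γ ∉ R.Φ) : False := by
  have ha : (0:ℝ) < inner ℝ α α := inner_self_pos' (R.nonzero α hα)
  have hbb : (0:ℝ) < inner ℝ β β := inner_self_pos' (R.nonzero β hβ)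
  have hcc : (0:ℝ) < inner ℝ γ γ := inner_self_pos' (R.nonzero γ hγ)
  have hab : (0:ℝ) ≤ inner ℝ α β := by
    by_contra h; push_neg at h
    exact nb (R.sum_mem hcr hα hβ h h1)
  have hac : (0:ℝ) ≤ inner ℝ α γ := by
    by_contra h; push_neg at h
    exact nc (R.sum_mem hcr hα hγ h h2)
  have hbc_mem : β + γ ∈ R.Φ := by
    have hin : (inner ℝ (α + β + γ) (-α) : ℝ) < 0 := by
      simp only [inner_add_left, inner_neg_right]
      rw [real_inner_comm α β, real_inner_comm α γ]
      linarith
    have hne : (α + β + γ) + (-α) ≠ 0 := by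
      intro h; apply h3; rw [← h]; abel
    have := R.sum_mem hcr hsum (R.neg_mem hα) hin hne
    have heq : (α + β + γ) + (-α) = β + γ := by abel
    rwa [heq] at this
  have hδβ : (inner ℝ (α + β + γ) β : ℝ) ≤ 0 := by
    by_contra h; push_neg at h
    have hin : (inner ℝ (α + β + γ) (-β) : ℝ) < 0 := by
      rw [inner_neg_right]; linarith
    have hne : (α + β + γ) + (-β) ≠ 0 := by
      intro hz; apply h2; rw [← hz]; abel
    have := R.sum_mem hcr hsum (R.neg_mem hβ) hin hne
    have heq : (α + β + γ) + (-β) = α + γ := by abel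
    rw [heq] at this
    exact nc this
  have hδγ : (inner ℝ (α + β + γ) γ : ℝ) ≤ 0 := by
    by_contra h; push_neg at h
    have hin : (inner ℝ (α + β + γ) (-γ) : ℝ) < 0 := by
      rw [inner_neg_right]; linarith
    have hne : (α + β + γ) + (-γ) ≠ 0 := by
      intro hz; apply h1; rw [← hz]; abel
    have := R.sum_mem hcr hsum (R.neg_mem hγ) hin hne
    have heq : (α + β + γ) + (-γ) = α + β := by abel
    rw [heq] at this
    exact nb this
  have hpos : (0:ℝ) < inner ℝ (β + γ) (β + γ) :=
    inner_self_pos' (R.nonzero _ hbc_mem)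
  simp only [inner_add_left, inner_add_right] at hpos hδβ hδγ
  linarith

theorem stmt0 (R : RootSys V) (hcr : R.IsCrystallographic)
    (α β γ : V) (hα : α ∈ R.Φ) (hβ : β ∈ R.Φ) (hγ : γ ∈ R.Φ)
    (hsum : α + β + γ ∈ R.Φ)
    (h1 : α + β ≠ 0) (h2 : α + γ ≠ 0) (h3 : β + γ ≠ 0) :
    (α + β ∈ R.Φ ∧ α + γ ∈ R.Φ) ∨ (α + β ∈ R.Φ ∧ β + γ ∈ R.Φ) ∨
      (α + γ ∈ R.Φ ∧ β + γ ∈ R.Φ) := by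
  by_cases hab : α + β ∈ R.Φ
  · by_cases hac : α + γ ∈ R.Φ
    · exact Or.inl ⟨hab, hac⟩
    · -- distinguished γ : γ+α ∉ Φ, γ+β ∉ Φ gives False, so β+γ ∈ Φ
      have hbc : β + γ ∈ R.Φ := by
        by_contra hbc
        exact R.key hcr hγ hα hβ
          (by rwa [show γ + α + β = α + β + γ by abel])
          (by rwa [add_comm γ α]) (by rwa [add_comm γ β]) h1
          (by rwa [add_comm γ α]) (by rwa [add_comm γ β])
      exact Or.inr (Or.inl ⟨hab, hbc⟩)
  · by_cases hac : α + γ ∈ R.Φ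
    · -- distinguished β
      have hbc : β + γ ∈ R.Φ := by
        by_contra hbc
        exact R.key hcr hβ hα hγ
          (by rwa [show β + α + γ = α + β + γ by abel])
          (by rwa [add_comm β α]) h3 h2
          (by rwa [add_comm β α]) hbc
      exact Or.inr (Or.inr ⟨hac, hbc⟩)
    · exact (R.key hcr hα hβ hγ hsum h1 h2 h3 hab hac).elim
end

section
/- Let Φ be a crystallographic root system. Any summable finite subset X ⊆ Φ (i.e. with Σ X ∈ Φ) having no vanishing subsum admits, for each chosen α ∈ X, a filtration of summable subsets {α} = X₁ ⊊ X₂ ⊊ ⋯ ⊊ X_{|X|} = X, where each X_i is summable (Σ X_i ∈ Φ) and |X_i| = i. -/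
/-! Two roots of a crystallographic root system with negative inner product sum to a root unless
they are opposite: the two Cartan integers are negative with product `< 4`, so one of them is `-1`
and the corresponding reflection produces the sum.

Let `S ⊊ X` be summable, `s = Σ S` and `T = X \ S`, so that `s + Σ T ∈ Φ`. If `⟪s, β⟫ < 0` for some
`β ∈ T`, then `s + β ∈ Φ`. Otherwise, as `Σ T ≠ 0`, some `β₀ ∈ T` has `⟪Σ T, β₀⟫ > 0`, hence
`⟪s + Σ T, β₀⟫ > 0` and `s + Σ (T \ {β₀}) ∈ Φ`; recurse on `T \ {β₀}`. So every summable proper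
subset of `X` grows by one element, and growing `{α}` step by step gives the filtration. -/

open Pointwise

variable {V : Type*} [NormedAddCommGroup V] [InnerProductSpace ℝ V]

open scoped RealInnerProductSpace

theorem Finset.exists_inner_sum_pos {T : Finset V} (h : T.sum id ≠ 0) :
    ∃ β ∈ T, 0 < ⟪T.sum id, β⟫ := by
  have : ∑ _β ∈ T, (0 : ℝ) < ∑ β ∈ T, ⟪T.sum id, β⟫ := by
    rw [Finset.sum_const_zero, ← inner_sum]
    exact real_inner_self_pos.mpr h
  exact Finset.exists_lt_of_sum_lt this

namespace RootSys

variable (R : RootSys V)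

lemma neg_mem_s2 {α : V} (hα : α ∈ R.Φ) : -α ∈ R.Φ := by
  have : -α ∈ R.Φ ∩ {x : V | ∃ t : ℝ, x = t • α} := by simp [R.line α hα]
  exact this.1

lemma neg_inner_lt_norm_mul_norm {α β : V} (hα : α ∈ R.Φ) (hβ : β ∈ R.Φ) (hip : ⟪α, β⟫ < 0)
    (hne : α + β ≠ 0) : -⟪α, β⟫ < ‖α‖ * ‖β‖ := by
  rw [← inner_neg_left, ← norm_neg α, inner_lt_norm_mul_iff_real]
  intro h
  have hα0 : ‖α‖ ≠ 0 := norm_ne_zero_iff.mpr (R.nonzero α hα)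
  have hline : β ∈ R.Φ ∩ {x : V | ∃ t : ℝ, x = t • α} :=
    ⟨hβ, -(‖β‖ / ‖α‖), by
      rw [neg_smul, ← smul_neg, div_eq_inv_mul, mul_smul, h, norm_neg, inv_smul_smul₀ hα0]⟩
  rw [R.line α hα] at hline
  rcases hline with rfl | rfl
  · exact hip.not_ge real_inner_self_nonneg
  · exact hne (add_neg_cancel α)

lemma add_mem_of_inner_neg (hcr : R.IsCrystallographic) {α β : V} (hα : α ∈ R.Φ)
    (hβ : β ∈ R.Φ) (hip : ⟪α, β⟫ < 0) (hne : α + β ≠ 0) : α + β ∈ R.Φ := by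
  obtain ⟨m, hm⟩ := hcr α hα β hβ
  obtain ⟨n, hn⟩ := hcr β hβ α hα
  have ha : 0 < ‖α‖ := norm_pos_iff.mpr (R.nonzero α hα)
  have hb : 0 < ‖β‖ := norm_pos_iff.mpr (R.nonzero β hβ)
  have hm' : 2 * ⟪α, β⟫ = m * ‖α‖ ^ 2 := by
    rwa [real_inner_self_eq_norm_sq, div_eq_iff (by positivity)] at hm
  have hn' : 2 * ⟪α, β⟫ = n * ‖β‖ ^ 2 := by
    rwa [real_inner_self_eq_norm_sq, real_inner_comm, div_eq_iff (by positivity)] at hn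
  have hcs := R.neg_inner_lt_norm_mul_norm hα hβ hip hne
  have hm_neg : m < 0 := by
    have : (m : ℝ) < 0 := by nlinarith
    exact_mod_cast this
  have hn_neg : n < 0 := by
    have : (n : ℝ) < 0 := by nlinarith
    exact_mod_cast this
  have hmn : m * n < 4 := by
    have : (m * n : ℝ) * (‖α‖ ^ 2 * ‖β‖ ^ 2) < 4 * (‖α‖ ^ 2 * ‖β‖ ^ 2) := by
      have : (m * ‖α‖ ^ 2) * (n * ‖β‖ ^ 2) = 4 * ⟪α, β⟫ ^ 2 := by rw [← hm', ← hn']; ring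
      nlinarith [mul_pos ha hb]
    exact_mod_cast lt_of_mul_lt_mul_right this (by positivity)
  have : m = -1 ∨ n = -1 := by
    by_contra! h
    nlinarith [show m ≤ -2 by omega, show n ≤ -2 by omega]
  rcases this with rfl | rfl
  · have := R.reflect α hα β hβ
    rw [hm] at this
    simpa [add_comm] using this
  · have := R.reflect β hβ α hα
    rw [hn] at this
    simpa using this

lemma exists_add_mem_of_add_sum_mem (hcr : R.IsCrystallographic) {s : V} (hs : s ∈ R.Φ)
    {T : Finset V} (hT : ↑T ⊆ R.Φ) (hTne : T.Nonempty) (hsum : s + T.sum id ∈ R.Φ)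
    (hnv : ∀ Y ⊆ T, s + Y.sum id ≠ 0) (hnv' : ∀ Y ⊆ T, Y.Nonempty → Y.sum id ≠ 0) :
    ∃ β ∈ T, s + β ∈ R.Φ := by
  classical
  induction T using Finset.strongInduction with
  | H T ih =>
    by_cases hneg : ∃ β ∈ T, ⟪s, β⟫ < 0
    · obtain ⟨β, hβT, hβ⟩ := hneg
      refine ⟨β, hβT, R.add_mem_of_inner_neg hcr hs (hT hβT) hβ ?_⟩
      simpa using hnv {β} (Finset.singleton_subset_iff.mpr hβT)
    push Not at hneg
    obtain ⟨β₀, hβ₀T, hβ₀⟩ := Finset.exists_inner_sum_pos (hnv' T subset_rfl hTne)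
    have hT' : (T.erase β₀).sum id = T.sum id - β₀ := by
      rw [eq_sub_iff_add_eq, add_comm]
      exact Finset.add_sum_erase T id hβ₀T
    rcases (T.erase β₀).eq_empty_or_nonempty with hT₀ | hT'ne
    · refine ⟨β₀, hβ₀T, ?_⟩
      rw [Finset.erase_eq_empty_iff, or_iff_right hTne.ne_empty] at hT₀
      simpa [hT₀] using hsum
    have hsum' : s + (T.erase β₀).sum id ∈ R.Φ := by
      have hne := hnv _ (Finset.erase_subset β₀ T)
      rw [hT', ← add_sub_assoc, sub_eq_add_neg] at hne ⊢
      refine R.add_mem_of_inner_neg hcr hsum (R.neg_mem_s2 (hT hβ₀T)) ?_ hne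
      rw [inner_neg_right, inner_add_left, neg_neg_iff_pos]
      exact add_pos_of_nonneg_of_pos (hneg β₀ hβ₀T) hβ₀
    obtain ⟨β, hβ, hβs⟩ := ih _ (Finset.erase_ssubset hβ₀T)
      (fun x hx => hT (Finset.mem_of_mem_erase hx)) hT'ne hsum'
      (fun Y hY => hnv Y (hY.trans (Finset.erase_subset β₀ T)))
      (fun Y hY => hnv' Y (hY.trans (Finset.erase_subset β₀ T)))
    exact ⟨β, Finset.mem_of_mem_erase hβ, hβs⟩

lemma exists_insert_sum_mem [DecidableEq V] (hcr : R.IsCrystallographic) {X S : Finset V}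
    (hX : ↑X ⊆ R.Φ) (hsum : X.sum id ∈ R.Φ) (hnv : ∀ Y ⊆ X, Y.Nonempty → Y.sum id ≠ 0)
    (hSX : S ⊆ X) (hS : S.sum id ∈ R.Φ) (hne : S ≠ X) :
    ∃ β ∈ X \ S, (insert β S).sum id ∈ R.Φ := by
  have hSne : S.Nonempty := Finset.nonempty_of_sum_ne_zero (R.nonzero _ hS)
  obtain ⟨β, hβ, hβS⟩ := R.exists_add_mem_of_add_sum_mem hcr hS (T := X \ S)
    (fun x hx => hX (Finset.sdiff_subset hx))
    (Finset.sdiff_nonempty.mpr fun h => hne (subset_antisymm hSX h))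
    (by rwa [add_comm, Finset.sum_sdiff hSX])
    (fun Y hY => by
      rw [← Finset.sum_union (Finset.disjoint_sdiff.mono_right hY)]
      exact hnv _ (Finset.union_subset hSX (hY.trans Finset.sdiff_subset))
        (hSne.mono Finset.subset_union_left))
    (fun Y hY => hnv Y (hY.trans Finset.sdiff_subset))
  refine ⟨β, hβ, ?_⟩
  rwa [Finset.sum_insert (Finset.mem_sdiff.mp hβ).2, add_comm]

end RootSys

open Finset in
theorem Finset.exists_chain_of_exists_insert {α : Type*} [DecidableEq α]
    {P : Finset α → Prop} {X : Finset α}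
    (hstep : ∀ S ⊆ X, P S → S ≠ X → ∃ β ∈ X \ S, P (insert β S))
    {S₀ : Finset α} (hS₀X : S₀ ⊆ X) (hS₀ : P S₀) :
    ∃ F : ℕ → Finset α, F #S₀ = S₀ ∧ F #X = X ∧
      (∀ i, #S₀ ≤ i → i ≤ #X → #(F i) = i ∧ F i ⊆ X ∧ P (F i)) ∧
      (∀ i, #S₀ ≤ i → i < #X → F i ⊂ F (i + 1)) := by
  obtain ⟨n, hn⟩ : ∃ n, #X - #S₀ = n := ⟨_, rfl⟩
  induction n generalizing S₀ with
  | zero =>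
    obtain rfl : S₀ = X := eq_of_subset_of_card_le hS₀X (by omega)
    exact ⟨fun _ => S₀, rfl, rfl, fun i h₁ h₂ => ⟨by dsimp only; omega, subset_rfl, hS₀⟩,
      fun i h₁ h₂ => by omega⟩
  | succ n ih =>
    have hlt : #S₀ < #X := by omega
    obtain ⟨β, hβ, hP⟩ := hstep S₀ hS₀X hS₀ (by rintro rfl; omega)
    rw [mem_sdiff] at hβ
    have hcard : #(insert β S₀) = #S₀ + 1 := card_insert_of_notMem hβ.2
    obtain ⟨F, hF₀, hFX, hF, hFlt⟩ := ih (insert_subset hβ.1 hS₀X) hP (by omega)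
    rw [hcard] at hF₀ hF hFlt
    refine ⟨fun i => if i ≤ #S₀ then S₀ else F i, by simp, by simp [hlt.not_ge, hFX],
      fun i h₁ h₂ => ?_, fun i h₁ h₂ => ?_⟩
    · dsimp only
      split_ifs with hi
      · exact ⟨by omega, hS₀X, hS₀⟩
      · exact hF i (by omega) h₂
    · rcases h₁.eq_or_lt with rfl | hi
      · simpa [hF₀] using ssubset_insert hβ.2
      · simpa [hi.not_ge, show ¬i + 1 ≤ #S₀ by omega] using hFlt i (by omega) h₂

theorem stmt2 (R : RootSys V) (hcr : R.IsCrystallographic)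
    (X : Finset V) (hX : ↑X ⊆ R.Φ) (hsum : X.sum id ∈ R.Φ)
    (hnv : ∀ Y ⊆ X, Y.Nonempty → Y.sum id ≠ 0)
    (α : V) (hαX : α ∈ X) :
    ∃ F : ℕ → Finset V, F 1 = {α} ∧ F X.card = X ∧
      (∀ i, 1 ≤ i → i ≤ X.card → (F i).card = i ∧ F i ⊆ X ∧ (F i).sum id ∈ R.Φ) ∧
      (∀ i, 1 ≤ i → i < X.card → F i ⊂ F (i + 1)) := by
  classical
  simpa using Finset.exists_chain_of_exists_insert (P := fun S => S.sum id ∈ R.Φ)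
    (fun S hSX hS hne => R.exists_insert_sum_mem hcr hX hsum hnv hSX hS hne)
    (Finset.singleton_subset_iff.mpr hαX) (by simpa using hX hαX)
end

section
/- Let Φ be a finite root system. In the weak order on antisymmetric subsets of Φ, every cover relation changes exactly one element: if R ≼ S is a cover relation among antisymmetric subsets, then either S = R ∖ {α} for some α ∈ R ∩ Φ⁺, or S = R ∪ {β} for some β ∈ Φ⁻ ∖ R. In particular this order is graded by R ↦ |R⁻| - |R⁺|. -/
open Pointwise

variable {V : Type*} [NormedAddCommGroup V] [InnerProductSpace ℝ V]

/-!
If `R ≼ S` and some positive root `α ∈ R` is missing from `S`, then `R ∖ {α}` is antisymmetric and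
lies between `R` and `S`, so by the cover property it equals `S`. Otherwise `R⁺ = S⁺`, and since
`R ≠ S` some negative root `β ∈ S` is missing from `R`; then `R ∪ {β}` lies between `R` and `S`
and is antisymmetric, because `-β ∈ R` would be a positive root of `R⁺ = S⁺` next to `β ∈ S`.
Either step raises `|R⁻| - |R⁺|` by exactly one.
-/

open Set

theorem IsAntisymSet.mono {W : Type*} [NormedAddCommGroup W] {R S : Set W}
    (hS : IsAntisymSet S) (hRS : R ⊆ S) : IsAntisymSet R :=
  fun α hα hnα => hS α (hRS hα) (hRS hnα)

theorem IsAntisymSet.insert {W : Type*} [NormedAddCommGroup W] {R : Set W} {β : W}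
    (hR : IsAntisymSet R) (hβ : -β ∉ R) (hβ_ne : -β ≠ β) : IsAntisymSet (insert β R) := by
  rintro α (rfl | hα) (hnα | hnα)
  · exact hβ_ne hnα
  · exact hβ hnα
  · exact hβ (by rw [← hnα, neg_neg]; exact hα)
  · exact hR α hα hnα

namespace PosRootSys

variable (P : PosRootSys V) {R S : Set V} {α β : V}

theorem notMem_neg_of_mem_pos (hα : α ∈ P.Pos) : α ∉ P.Neg :=
  fun hα' => (hα.2.trans hα'.2).false

theorem inter_pos_union_inter_neg (hR : R ⊆ P.Φ) : R ∩ P.Pos ∪ R ∩ P.Neg = R := by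
  rw [← inter_union_distrib_left, inter_eq_left]
  intro x hx
  rcases (P.generic x (hR hx)).lt_or_gt with h | h
  exacts [Or.inr ⟨hR hx, h⟩, Or.inl ⟨hR hx, h⟩]

theorem wle_diff_singleton (hα : α ∈ P.Pos) : P.wle R (R \ {α}) :=
  ⟨fun _ hx => ⟨hx.1.1, hx.2⟩,
    fun _ hx => ⟨⟨hx.1, fun h => P.notMem_neg_of_mem_pos (h ▸ hα) hx.2⟩, hx.2⟩⟩

theorem wle_diff_singleton_of_wle (hle : P.wle R S) (hα : α ∉ S) : P.wle (R \ {α}) S :=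
  ⟨fun _ hx => ⟨⟨(hle.1 hx).1, fun h => hα (h ▸ hx.1)⟩, hx.2⟩,
    fun _ hx => hle.2 ⟨hx.1.1, hx.2⟩⟩

theorem wle_insert (hβ : β ∈ P.Neg) : P.wle R (insert β R) := by
  refine ⟨fun _ ⟨hxR, hx⟩ => ?_, fun x hx => ⟨Or.inr hx.1, hx.2⟩⟩
  rcases hxR with rfl | hxR
  exacts [(P.notMem_neg_of_mem_pos hx hβ).elim, ⟨hxR, hx⟩]

theorem wle_insert_of_wle (hle : P.wle R S) (hβ : β ∈ S) : P.wle (insert β R) S := by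
  refine ⟨fun x hx => ⟨Or.inr (hle.1 hx).1, hx.2⟩, fun _ ⟨hxR, hx⟩ => ?_⟩
  rcases hxR with rfl | hxR
  exacts [⟨hβ, hx⟩, hle.2 ⟨hxR, hx⟩]

theorem exists_mem_pos_diff_or_exists_mem_neg_diff (hR : R ⊆ P.Φ) (hS : S ⊆ P.Φ)
    (hle : P.wle R S) (hne : R ≠ S) :
    (∃ α ∈ R ∩ P.Pos, α ∉ S) ∨ (R ∩ P.Pos ⊆ S ∧ ∃ β ∈ S ∩ P.Neg, β ∉ R) := by
  by_cases hpos : R ∩ P.Pos ⊆ S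
  · refine Or.inr ⟨hpos, ?_⟩
    by_contra! hneg
    have hpos_eq : R ∩ P.Pos = S ∩ P.Pos :=
      (subset_antisymm hle.1 fun x hx => ⟨hpos hx, hx.2⟩).symm
    have hneg_eq : R ∩ P.Neg = S ∩ P.Neg :=
      subset_antisymm hle.2 fun x hx => ⟨hneg x hx, hx.2⟩
    apply hne
    rw [← P.inter_pos_union_inter_neg hR, ← P.inter_pos_union_inter_neg hS, hpos_eq, hneg_eq]
  · exact Or.inl (not_subset.1 hpos)

theorem eq_diff_singleton_of_cover (hR : R ⊆ P.Φ) (haR : IsAntisymSet R) (hle : P.wle R S)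
    (hcov : ∀ T : Set V, T ⊆ P.Φ → IsAntisymSet T → P.wle R T → P.wle T S → T = R ∨ T = S)
    (hα : α ∈ R ∩ P.Pos) (hαS : α ∉ S) : S = R \ {α} := by
  rcases hcov _ (sdiff_subset.trans hR) (haR.mono sdiff_subset) (P.wle_diff_singleton hα.2)
    (P.wle_diff_singleton_of_wle hle hαS) with h | h
  · exact ((h.ge hα.1).2 rfl).elim
  · exact h.symm

theorem eq_insert_of_cover (hR : R ⊆ P.Φ) (haR : IsAntisymSet R) (haS : IsAntisymSet S)
    (hle : P.wle R S)
    (hcov : ∀ T : Set V, T ⊆ P.Φ → IsAntisymSet T → P.wle R T → P.wle T S → T = R ∨ T = S)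
    (hpos : R ∩ P.Pos ⊆ S) (hβ : β ∈ S ∩ P.Neg) (hβR : β ∉ R) : S = insert β R := by
  have hnegβ : -β ∉ R := fun h =>
    haS β hβ.1 (hpos ⟨h, hR h, by rw [map_neg]; linarith [hβ.2.2]⟩)
  have hβ_ne : -β ≠ β := fun h => by
    have := congrArg P.f h
    rw [map_neg] at this
    linarith [hβ.2.2]
  rcases hcov _ (insert_subset hβ.2.1 hR) (haR.insert hnegβ hβ_ne) (P.wle_insert hβ.2)
    (P.wle_insert_of_wle hle hβ.1) with h | h
  · exact (hβR (h ▸ mem_insert β R)).elim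
  · exact h.symm

noncomputable def grade (R : Set V) : ℤ := (R ∩ P.Neg).ncard - (R ∩ P.Pos).ncard

theorem grade_diff_singleton (hfin : (R ∩ P.Pos).Finite) (hα : α ∈ R ∩ P.Pos) :
    P.grade (R \ {α}) = P.grade R + 1 := by
  have hcard := ncard_sdiff_singleton_add_one hα hfin
  have hneg : (R ∩ P.Neg) \ {α} = R ∩ P.Neg :=
    sdiff_singleton_eq_self fun h => P.notMem_neg_of_mem_pos hα.2 h.2
  simp only [grade, ← inter_sdiff_right_comm, hneg]
  omega

theorem grade_insert (hfin : (R ∩ P.Neg).Finite) (hβ : β ∈ P.Neg) (hβR : β ∉ R) :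
    P.grade (insert β R) = P.grade R + 1 := by
  have hβpos : β ∉ P.Pos := fun h => P.notMem_neg_of_mem_pos h hβ
  simp only [grade, insert_inter_of_mem hβ, insert_inter_of_notMem hβpos,
    ncard_insert_of_notMem (fun h => hβR h.1) hfin]
  push_cast
  ring

end PosRootSys

theorem stmt9 (P : PosRootSys V) (R S : Set V)
    (hR : R ⊆ P.Φ) (hS : S ⊆ P.Φ) (haR : IsAntisymSet R) (haS : IsAntisymSet S)
    (hle : P.wle R S) (hne : R ≠ S)
    (hcov : ∀ T : Set V, T ⊆ P.Φ → IsAntisymSet T → P.wle R T → P.wle T S →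
      T = R ∨ T = S) :
    ((∃ α ∈ R ∩ P.Pos, S = R \ {α}) ∨ (∃ β ∈ P.Neg, β ∉ R ∧ S = R ∪ {β})) ∧
      ((S ∩ P.Neg).ncard : ℤ) - ((S ∩ P.Pos).ncard : ℤ)
        = ((R ∩ P.Neg).ncard : ℤ) - ((R ∩ P.Pos).ncard : ℤ) + 1 := by
  have hfin : R.Finite := P.finite.subset hR
  rcases P.exists_mem_pos_diff_or_exists_mem_neg_diff hR hS hle hne with
    ⟨α, hα, hαS⟩ | ⟨hpos, β, hβ, hβR⟩
  · obtain rfl := P.eq_diff_singleton_of_cover hR haR hle hcov hα hαS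
    exact ⟨Or.inl ⟨α, hα, rfl⟩, P.grade_diff_singleton (hfin.inter_of_left _) hα⟩
  · obtain rfl := P.eq_insert_of_cover hR haR haS hle hcov hpos hβ hβR
    exact ⟨Or.inr ⟨β, hβ.2, hβR, union_singleton.symm⟩,
      P.grade_insert (hfin.inter_of_left _) hβ.2 hβR⟩
end
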